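/- arXiv:2604.13626 — 6 statements merged into one kernel-verified Lean document; each statement's English description precedes it below -/
import Mathlib

section
/- Let γ be a modulus function, A ⊆ ℝ Lebesgue measurable, and x ∈ ℝ. Then x is a γ-density point of A (i.e., lim_{α→0⁺} γ(|(x−α,x+α) ∩ Aᶜ|)/γ(2α) = 0) if and only if x is both a left γ-density point (lim_{α→0⁺} γ(|(x−α,x) ∩ Aᶜ|)/γ(α) = 0) and a right γ-density point (lim_{α→0⁺} γ(|(x,x+α) ∩ Aᶜ|)/γ(α) = 0) of A. -/
open MeasureTheory Set Filter Topology

/-- γ is a modulus function (on [0,∞); values and hypotheses only matter for nonnegative arguments). -/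
def IsModulus (γ : ℝ → ℝ) : Prop :=
  (∀ a, 0 ≤ a → 0 ≤ γ a) ∧
  (∀ a, 0 ≤ a → (γ a = 0 ↔ a = 0)) ∧
  (∀ a b, 0 ≤ a → 0 ≤ b → γ (a + b) ≤ γ a + γ b) ∧
  ContinuousWithinAt γ (Set.Ici 0) 0 ∧
  (∀ a b, 0 ≤ a → a ≤ b → γ a ≤ γ b)

/-- |(x-α, x+α) ∩ Aᶜ| -/
noncomputable def mInt (A : Set ℝ) (x α : ℝ) : ℝ :=
  (volume (Set.Ioo (x - α) (x + α) ∩ Aᶜ)).toReal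

/-- x is a γ-density point of A. -/
def IsGammaDensityPt (γ : ℝ → ℝ) (A : Set ℝ) (x : ℝ) : Prop :=
  Tendsto (fun α => γ (mInt A x α) / γ (2 * α)) (𝓝[>] (0:ℝ)) (𝓝 0)

/-- x is a Lebesgue density point of A. -/
def IsLebDensityPt (A : Set ℝ) (x : ℝ) : Prop :=
  Tendsto (fun α => mInt A x α / (2 * α)) (𝓝[>] (0:ℝ)) (𝓝 0)

/-!
Write `L α`, `R α` and `M α` for the measures of `Aᶜ` in `(x - α, x)`, `(x, x + α)` and
`(x - α, x + α)`. Then `L, R ≤ M ≤ L + R`. Monotonicity and subadditivity of `γ` give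
`γ (L α) / γ α ≤ 2 γ (M α) / γ (2α)` (as `γ (2α) ≤ 2 γ α`) and
`γ (M α) / γ (2α) ≤ (γ (L α) + γ (R α)) / γ α` (as `γ α ≤ γ (2α)`), and both implications
follow by squeezing.
-/

namespace IsModulus

variable {γ : ℝ → ℝ} (hγ : IsModulus γ)
include hγ

lemma nonneg {a : ℝ} (ha : 0 ≤ a) : 0 ≤ γ a := hγ.1 a ha

lemma pos {a : ℝ} (ha : 0 < a) : 0 < γ a :=
  (hγ.nonneg ha.le).lt_of_ne fun h => ha.ne' ((hγ.2.1 a ha.le).mp h.symm)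

lemma mono {a b : ℝ} (ha : 0 ≤ a) (hab : a ≤ b) : γ a ≤ γ b := hγ.2.2.2.2 a b ha hab

lemma add_le {a b : ℝ} (ha : 0 ≤ a) (hb : 0 ≤ b) : γ (a + b) ≤ γ a + γ b := hγ.2.2.1 a b ha hb

lemma div_nonneg {a b : ℝ} (ha : 0 ≤ a) (hb : 0 ≤ b) : 0 ≤ γ a / γ b :=
  _root_.div_nonneg (hγ.nonneg ha) (hγ.nonneg hb)

lemma two_mul_le {a : ℝ} (ha : 0 ≤ a) : γ (2 * a) ≤ 2 * γ a := by
  simpa [two_mul] using hγ.add_le ha ha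

lemma div_le_two_mul_div {a b α : ℝ} (hα : 0 < α) (ha : 0 ≤ a) (hab : a ≤ b) :
    γ a / γ α ≤ 2 * (γ b / γ (2 * α)) := by
  have hγα := hγ.pos hα
  have hγ2α := hγ.pos (by positivity : 0 < 2 * α)
  rw [div_le_iff₀ hγα, mul_div_assoc', div_mul_eq_mul_div, le_div_iff₀ hγ2α]
  calc γ a * γ (2 * α) ≤ γ b * (2 * γ α) :=
        mul_le_mul (hγ.mono ha hab) (hγ.two_mul_le hα.le) hγ2α.le (hγ.nonneg (ha.trans hab))
    _ = 2 * γ b * γ α := by ring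

lemma div_two_mul_le_add {a b c α : ℝ} (hα : 0 < α) (ha : 0 ≤ a) (hb : 0 ≤ b) (hc : 0 ≤ c)
    (hcab : c ≤ a + b) : γ c / γ (2 * α) ≤ γ a / γ α + γ b / γ α :=
  calc γ c / γ (2 * α) ≤ γ c / γ α :=
        div_le_div_of_nonneg_left (hγ.nonneg hc) (hγ.pos hα) (hγ.mono hα.le (by linarith))
    _ ≤ (γ a + γ b) / γ α := by
        gcongr
        · exact (hγ.pos hα).le
        · exact (hγ.mono hc hcab).trans (hγ.add_le ha hb)
    _ = γ a / γ α + γ b / γ α := add_div _ _ _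

lemma tendsto_div_of_le {F M : ℝ → ℝ} (hF : ∀ α, 0 ≤ F α) (hFM : ∀ α, 0 < α → F α ≤ M α)
    (hM : Tendsto (fun α => γ (M α) / γ (2 * α)) (𝓝[>] 0) (𝓝 0)) :
    Tendsto (fun α => γ (F α) / γ α) (𝓝[>] 0) (𝓝 0) := by
  refine tendsto_of_tendsto_of_tendsto_of_le_of_le' tendsto_const_nhds
    (by simpa using hM.const_mul 2) ?_ ?_
  all_goals filter_upwards [self_mem_nhdsWithin] with α (hα : 0 < α)
  · exact hγ.div_nonneg (hF α) hα.le
  · exact hγ.div_le_two_mul_div hα (hF α) (hFM α hα)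

lemma tendsto_div_two_mul_of_le_add {L R M : ℝ → ℝ} (hL₀ : ∀ α, 0 ≤ L α) (hR₀ : ∀ α, 0 ≤ R α)
    (hM₀ : ∀ α, 0 ≤ M α) (hMLR : ∀ α, M α ≤ L α + R α)
    (hL : Tendsto (fun α => γ (L α) / γ α) (𝓝[>] 0) (𝓝 0))
    (hR : Tendsto (fun α => γ (R α) / γ α) (𝓝[>] 0) (𝓝 0)) :
    Tendsto (fun α => γ (M α) / γ (2 * α)) (𝓝[>] 0) (𝓝 0) := by
  refine tendsto_of_tendsto_of_tendsto_of_le_of_le' tendsto_const_nhds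
    (by simpa using hL.add hR) ?_ ?_
  all_goals filter_upwards [self_mem_nhdsWithin] with α (hα : 0 < α)
  · exact hγ.div_nonneg (hM₀ α) (by positivity)
  · exact hγ.div_two_mul_le_add hα (hL₀ α) (hR₀ α) (hM₀ α) (hMLR α)

end IsModulus

lemma measure_Ioo_inter_le_add {μ : Measure ℝ} [NullSingletonClass μ] (s : Set ℝ) (a b c : ℝ) :
    μ (Ioo a c ∩ s) ≤ μ (Ioo a b ∩ s) + μ (Ioo b c ∩ s) := by
  have hsub : Ioo a c ∩ s ⊆ insert b ((Ioo a b ∩ s) ∪ (Ioo b c ∩ s)) := by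
    rintro y ⟨⟨hay, hyc⟩, hys⟩
    rcases lt_trichotomy y b with hyb | rfl | hby
    · exact Or.inr (Or.inl ⟨⟨hay, hyb⟩, hys⟩)
    · exact Or.inl rfl
    · exact Or.inr (Or.inr ⟨⟨hby, hyc⟩, hys⟩)
  calc μ (Ioo a c ∩ s) ≤ μ (insert b ((Ioo a b ∩ s) ∪ (Ioo b c ∩ s))) := measure_mono hsub
    _ = μ ((Ioo a b ∩ s) ∪ (Ioo b c ∩ s)) := measure_congr (insert_ae_eq_self b _)
    _ ≤ μ (Ioo a b ∩ s) + μ (Ioo b c ∩ s) := measure_union_le _ _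

lemma volume_Ioo_inter_ne_top (a b : ℝ) (s : Set ℝ) : volume (Ioo a b ∩ s) ≠ ⊤ :=
  ((measure_mono inter_subset_left).trans_lt measure_Ioo_lt_top).ne

lemma volume_Ioo_inter_toReal_mono {a b c d : ℝ} (s : Set ℝ) (hca : c ≤ a) (hbd : b ≤ d) :
    (volume (Ioo a b ∩ s)).toReal ≤ (volume (Ioo c d ∩ s)).toReal :=
  ENNReal.toReal_mono (volume_Ioo_inter_ne_top c d s)
    (measure_mono (inter_subset_inter_left s (Ioo_subset_Ioo hca hbd)))

lemma mInt_le_add (A : Set ℝ) (x α : ℝ) :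
    mInt A x α ≤
      (volume (Ioo (x - α) x ∩ Aᶜ)).toReal + (volume (Ioo x (x + α) ∩ Aᶜ)).toReal := by
  rw [← ENNReal.toReal_add (volume_Ioo_inter_ne_top _ _ _) (volume_Ioo_inter_ne_top _ _ _)]
  exact ENNReal.toReal_mono
    (ENNReal.add_ne_top.mpr ⟨volume_Ioo_inter_ne_top _ _ _, volume_Ioo_inter_ne_top _ _ _⟩)
    (measure_Ioo_inter_le_add _ _ _ _)

theorem stmt2_general (γ : ℝ → ℝ) (hγ : IsModulus γ) (A : Set ℝ) (x : ℝ) :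
    IsGammaDensityPt γ A x ↔
      (Tendsto (fun α => γ ((volume (Set.Ioo (x - α) x ∩ Aᶜ)).toReal) / γ α)
          (𝓝[>] (0:ℝ)) (𝓝 0) ∧
       Tendsto (fun α => γ ((volume (Set.Ioo x (x + α) ∩ Aᶜ)).toReal) / γ α)
          (𝓝[>] (0:ℝ)) (𝓝 0)) := by
  refine ⟨fun h => ⟨?_, ?_⟩, fun ⟨hL, hR⟩ => ?_⟩
  · exact hγ.tendsto_div_of_le (fun _ => ENNReal.toReal_nonneg)
      (fun α hα => volume_Ioo_inter_toReal_mono _ le_rfl (by linarith)) h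
  · exact hγ.tendsto_div_of_le (fun _ => ENNReal.toReal_nonneg)
      (fun α hα => volume_Ioo_inter_toReal_mono _ (by linarith) le_rfl) h
  · exact hγ.tendsto_div_two_mul_of_le_add (fun _ => ENNReal.toReal_nonneg)
      (fun _ => ENNReal.toReal_nonneg) (fun _ => ENNReal.toReal_nonneg) (mInt_le_add A x) hL hR

theorem stmt2 (γ : ℝ → ℝ) (hγ : IsModulus γ) (A : Set ℝ) (hA : MeasurableSet A) (x : ℝ) :
    IsGammaDensityPt γ A x ↔
      (Tendsto (fun α => γ ((volume (Set.Ioo (x - α) x ∩ Aᶜ)).toReal) / γ α)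
          (𝓝[>] (0:ℝ)) (𝓝 0) ∧
       Tendsto (fun α => γ ((volume (Set.Ioo x (x + α) ∩ Aᶜ)).toReal) / γ α)
          (𝓝[>] (0:ℝ)) (𝓝 0)) :=
  stmt2_general γ hγ A x
end

section
/- Let γ₁, γ₂ be modulus functions such that there exist constants a, b, δ > 0 with a ≤ γ₁(t)/γ₂(t) ≤ b for all 0 < t < δ. Then for every Lebesgue measurable set A ⊆ ℝ, the set of γ₁-density points of A equals the set of γ₂-density points of A. -/
open MeasureTheory Set Filter Topology

/-!
Comparability of γ₁ and γ₂ near 0 gives `γ₂ t ≤ a⁻¹ γ₁ t` and `γ₁ t ≤ b γ₂ t` for small `t`.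
Since `|(x-α, x+α) ∩ Aᶜ| ≤ 2α`, both arguments of the density quotient are small, so each
quotient is bounded by `b / a` times the other and the two limits vanish together.
-/

lemma mInt_nonneg (A : Set ℝ) (x α : ℝ) : 0 ≤ mInt A x α := ENNReal.toReal_nonneg

lemma mInt_le_two_mul (A : Set ℝ) (x : ℝ) {α : ℝ} (hα : 0 ≤ α) : mInt A x α ≤ 2 * α := by
  have hvol : volume (Ioo (x - α) (x + α)) = ENNReal.ofReal (2 * α) := by
    rw [Real.volume_Ioo]; ring_nf
  calc mInt A x α ≤ (volume (Ioo (x - α) (x + α))).toReal :=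
        ENNReal.toReal_mono (hvol ▸ ENNReal.ofReal_ne_top) (measure_mono inter_subset_left)
    _ = 2 * α := by rw [hvol, ENNReal.toReal_ofReal (by positivity)]

namespace IsModulus

variable {γ : ℝ → ℝ}

lemma nonneg_s3 (h : IsModulus γ) {t : ℝ} (ht : 0 ≤ t) : 0 ≤ γ t := h.1 t ht

lemma map_zero (h : IsModulus γ) : γ 0 = 0 := (h.2.1 0 le_rfl).mpr rfl

lemma pos_s3 (h : IsModulus γ) {t : ℝ} (ht : 0 < t) : 0 < γ t :=
  (h.nonneg_s3 ht.le).lt_of_ne fun h0 => ht.ne' ((h.2.1 t ht.le).mp h0.symm)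

end IsModulus

lemma div_le_mul_mul_div_of_le_mul {p q r s c d : ℝ} (hp : 0 ≤ p) (hr : 0 < r) (hs : 0 < s)
    (hpq : p ≤ c * q) (hrs : r ≤ d * s) : p / s ≤ c * d * (q / r) :=
  calc p / s ≤ c * q / s := div_le_div_of_nonneg_right hpq hs.le
    _ ≤ c * q / (r / d) := by
        have hd : 0 < d := pos_of_mul_pos_left (hr.trans_le hrs) hs.le
        exact div_le_div_of_nonneg_left (hp.trans hpq) (div_pos hr hd)
          ((div_le_iff₀' hd).mpr hrs)
    _ = c * d * (q / r) := by field_simp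

lemma IsGammaDensityPt.of_le_mul {γ₁ γ₂ : ℝ → ℝ} (h₁ : IsModulus γ₁) (h₂ : IsModulus γ₂)
    {c d δ : ℝ} (hδ : 0 < δ) (hupper : ∀ t, 0 < t → t < δ → γ₂ t ≤ c * γ₁ t)
    (hlower : ∀ t, 0 < t → t < δ → γ₁ t ≤ d * γ₂ t) {A : Set ℝ} {x : ℝ}
    (h : IsGammaDensityPt γ₁ A x) : IsGammaDensityPt γ₂ A x := by
  have hupper₀ : ∀ t, 0 ≤ t → t < δ → γ₂ t ≤ c * γ₁ t := by
    intro t ht htδ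
    rcases ht.eq_or_lt with rfl | ht
    · simp [h₁.map_zero, h₂.map_zero]
    · exact hupper t ht htδ
  have hsmall : Ioo (0 : ℝ) (δ / 2) ∈ 𝓝[>] (0 : ℝ) :=
    Ioo_mem_nhdsGT_of_mem ⟨le_rfl, half_pos hδ⟩
  refine squeeze_zero' ?_ ?_ (by simpa using h.const_mul (c * d))
  · filter_upwards [hsmall] with α hα
    exact div_nonneg (h₂.nonneg_s3 (mInt_nonneg A x α)) (h₂.nonneg_s3 (by linarith [hα.1]))
  · filter_upwards [hsmall] with α ⟨hα, hαδ⟩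
    have hm := mInt_le_two_mul A x hα.le
    exact div_le_mul_mul_div_of_le_mul (h₂.nonneg_s3 (mInt_nonneg A x α)) (h₁.pos_s3 (by positivity))
      (h₂.pos_s3 (by positivity)) (hupper₀ _ (mInt_nonneg A x α) (by linarith))
      (hlower _ (by positivity) (by linarith))

theorem stmt3_general (γ₁ γ₂ : ℝ → ℝ) (h₁ : IsModulus γ₁) (h₂ : IsModulus γ₂)
    (a b δ : ℝ) (ha : 0 < a) (hδ : 0 < δ)
    (hcomp : ∀ t : ℝ, 0 < t → t < δ → a ≤ γ₁ t / γ₂ t ∧ γ₁ t / γ₂ t ≤ b)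
    (A : Set ℝ) :
    {x : ℝ | IsGammaDensityPt γ₁ A x} = {x : ℝ | IsGammaDensityPt γ₂ A x} := by
  have h₂₁ : ∀ t, 0 < t → t < δ → γ₂ t ≤ a⁻¹ * γ₁ t := fun t ht htδ => by
    rw [le_inv_mul_iff₀ ha, ← le_div_iff₀ (h₂.pos_s3 ht)]
    exact (hcomp t ht htδ).1
  have h₁₂ : ∀ t, 0 < t → t < δ → γ₁ t ≤ b * γ₂ t := fun t ht htδ =>
    (div_le_iff₀ (h₂.pos_s3 ht)).mp (hcomp t ht htδ).2
  ext x
  exact ⟨IsGammaDensityPt.of_le_mul h₁ h₂ hδ h₂₁ h₁₂,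
    IsGammaDensityPt.of_le_mul h₂ h₁ hδ h₁₂ h₂₁⟩

theorem stmt3 (γ₁ γ₂ : ℝ → ℝ) (h₁ : IsModulus γ₁) (h₂ : IsModulus γ₂)
    (a b δ : ℝ) (ha : 0 < a) (hb : 0 < b) (hδ : 0 < δ)
    (hcomp : ∀ t : ℝ, 0 < t → t < δ → a ≤ γ₁ t / γ₂ t ∧ γ₁ t / γ₂ t ≤ b)
    (A : Set ℝ) (hA : MeasurableSet A) :
    {x : ℝ | IsGammaDensityPt γ₁ A x} = {x : ℝ | IsGammaDensityPt γ₂ A x} :=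
  stmt3_general γ₁ γ₂ h₁ h₂ a b δ ha hδ hcomp A
end

section
/- Let γ be a modulus function and A ⊆ ℝ a Lebesgue measurable set. If x is a γ-density point of A (i.e., lim_{α→0⁺} γ(|(x−α,x+α) ∩ Aᶜ|)/γ(2α) = 0), then x is a Lebesgue density point of A (i.e., lim_{α→0⁺} |(x−α,x+α) ∩ Aᶜ|/(2α) = 0). -/
open MeasureTheory Set Filter Topology

lemma modulus_nsmul (γ : ℝ → ℝ) (hγ : IsModulus γ) (t : ℝ) (ht : 0 ≤ t) (N : ℕ) :
    γ ((N : ℝ) * t) ≤ (N : ℝ) * γ t := by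
  obtain ⟨hpos, hzero, hsub, _, _⟩ := hγ
  induction N with
  | zero =>
    simp only [Nat.cast_zero, zero_mul]
    exact le_of_eq ((hzero 0 le_rfl).mpr rfl)
  | succ n ih =>
    have h : ((n + 1 : ℕ) : ℝ) * t = (n : ℝ) * t + t := by push_cast; ring
    rw [h]
    calc γ ((n : ℝ) * t + t) ≤ γ ((n : ℝ) * t) + γ t :=
          hsub _ _ (by positivity) ht
      _ ≤ (n : ℝ) * γ t + γ t := by linarith
      _ = ((n + 1 : ℕ) : ℝ) * γ t := by push_cast; ring

theorem stmt4 (γ : ℝ → ℝ) (hγ : IsModulus γ) (A : Set ℝ) (hA : MeasurableSet A)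
    (x : ℝ) (hx : IsGammaDensityPt γ A x) : IsLebDensityPt A x := by
  obtain ⟨hpos, hzero, hsub, hcont, hmono⟩ := id hγ
  rw [IsGammaDensityPt, Metric.tendsto_nhds] at hx
  rw [IsLebDensityPt, Metric.tendsto_nhds]
  intro ε hε
  set N := Nat.ceil (ε⁻¹) with hNdef
  have hN0 : 0 < (N : ℝ) := by
    have : 0 < N := Nat.ceil_pos.mpr (by positivity)
    exact_mod_cast this
  have hNε : 1 ≤ (N : ℝ) * ε := by
    have h1 : ε⁻¹ ≤ (N : ℝ) := Nat.le_ceil _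
    calc (1 : ℝ) = ε⁻¹ * ε := (inv_mul_cancel₀ hε.ne').symm
      _ ≤ (N : ℝ) * ε := mul_le_mul_of_nonneg_right h1 hε.le
  filter_upwards [hx (1 / N) (by positivity), self_mem_nhdsWithin] with α hα hα0
  have hα0 : (0 : ℝ) < α := hα0
  have hm : 0 ≤ mInt A x α := ENNReal.toReal_nonneg
  have h2α : (0 : ℝ) < 2 * α := by linarith
  rw [Real.dist_eq, sub_zero, abs_of_nonneg (by positivity)]
  by_contra hcon
  push_neg at hcon
  have hge : ε * (2 * α) ≤ mInt A x α := by
    rw [le_div_iff₀ h2α] at hcon; linarith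
  have htpos : 0 < ε * (2 * α) := by positivity
  have hγt : 0 < γ (ε * (2 * α)) := by
    rcases lt_or_eq_of_le (hpos _ htpos.le) with h | h
    · exact h
    · exact absurd ((hzero _ htpos.le).mp h.symm) htpos.ne'
  have hγ2α : 0 < γ (2 * α) := by
    rcases lt_or_eq_of_le (hpos _ h2α.le) with h | h
    · exact h
    · exact absurd ((hzero _ h2α.le).mp h.symm) h2α.ne'
  have hchain : γ (2 * α) ≤ (N : ℝ) * γ (ε * (2 * α)) := by
    calc γ (2 * α) ≤ γ ((N : ℝ) * (ε * (2 * α))) :=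
          hmono _ _ h2α.le (by nlinarith)
      _ ≤ (N : ℝ) * γ (ε * (2 * α)) := modulus_nsmul γ hγ _ htpos.le N
  have hγm : γ (ε * (2 * α)) ≤ γ (mInt A x α) := hmono _ _ htpos.le hge
  have hratio : 1 / (N : ℝ) ≤ γ (mInt A x α) / γ (2 * α) := by
    rw [div_le_div_iff₀ hN0 hγ2α]
    nlinarith
  rw [Real.dist_eq, sub_zero] at hα
  have : γ (mInt A x α) / γ (2 * α) < 1 / (N : ℝ) :=
    lt_of_abs_lt hα
  linarith
end

section
/- There exist a modulus function γ and a Lebesgue measurable set B ⊆ ℝ such that 0 is a Lebesgue density point of B but 0 is not a γ-density point of B. Concretely, one may take γ(t) = 1/log(e/t) for 0 < t ≤ e⁻¹ (extended affinely for t > e⁻¹, with γ(0)=0), and B the complement of a union of intervals Iₙ ∪ (−Iₙ) where Iₙ = (2^{−(n+1)}, 2^{−(n+1)} + δₙ/2) with δₙ = 4^{−n} − 4^{−(n+1)}; then |Bᶜ ∩ (−h,h)|/(2h) → 0 but γ(|Bᶜ ∩ (−h,h)|)/γ(2h) → 1/2 as h → 0⁺. -/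
open MeasureTheory Set Filter Topology

/-!
The modulus `γ(t) = 1 / log (e / t)` is subadditive because `γ(t) / t` decreases, and it decays
so slowly at `0` that `γ(h²) / γ(2h) → 1 / 2`. Remove from `ℝ` the gaps `(rₙ - rₙ², rₙ)`,
`rₙ = 2⁻⁽ⁿ⁺¹⁾`: inside `(-h, h)` they have total length `O(h²)`, so `0` is a Lebesgue density point
of what is left, but at `h = rₙ` their length is at least `h²`, and `γ(h²)` is comparable to `γ(2h)`.
-/

open Real

lemma apply_add_le_of_antitoneOn_div {f : ℝ → ℝ} (h0 : 0 ≤ f 0)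
    (hf : AntitoneOn (fun t => f t / t) (Ioi 0)) {a b : ℝ} (ha : 0 ≤ a) (hb : 0 ≤ b) :
    f (a + b) ≤ f a + f b := by
  rcases ha.eq_or_lt with rfl | ha
  · simpa using h0
  rcases hb.eq_or_lt with rfl | hb
  · simpa using h0
  have hab : 0 < a + b := by positivity
  have hfa : f (a + b) / (a + b) ≤ f a / a := hf ha hab (by linarith)
  have hfb : f (a + b) / (a + b) ≤ f b / b := hf hb hab (by linarith)
  calc f (a + b) = a * (f (a + b) / (a + b)) + b * (f (a + b) / (a + b)) := by
        field_simp
    _ ≤ a * (f a / a) + b * (f b / b) := by gcongr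
    _ = f a + f b := by field_simp

lemma monotoneOn_mul_one_sub_log : MonotoneOn (fun t => t * (1 - log t)) (Ioc 0 1) := by
  rintro s ⟨hs, -⟩ t ⟨ht, ht1⟩ hst
  have hlog_t : log t ≤ 0 := log_nonpos ht.le ht1
  have hlog_ts : s * (log t - log s) ≤ t - s := by
    have := log_le_sub_one_of_pos (div_pos ht hs)
    rw [log_div ht.ne' hs.ne'] at this
    calc s * (log t - log s) ≤ s * (t / s - 1) := by gcongr
      _ = t - s := by field_simp
  nlinarith [mul_nonneg (sub_nonneg.2 hst) (neg_nonneg.2 hlog_t)]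

/-- `1 / log (e / t)` on `(0, e⁻¹]`, and constant `1 / 2` beyond. -/
noncomputable def logModulus (t : ℝ) : ℝ :=
  if t ≤ 0 then 0 else (1 - log (min t (exp (-1))))⁻¹

section logModulus

variable {s t : ℝ}

lemma logModulus_of_nonpos (ht : t ≤ 0) : logModulus t = 0 := if_pos ht

lemma logModulus_of_pos (ht : 0 < t) : logModulus t = (1 - log (min t (exp (-1))))⁻¹ :=
  if_neg ht.not_ge

lemma logModulus_of_le (ht : 0 < t) (hte : t ≤ exp (-1)) : logModulus t = (1 - log t)⁻¹ := by
  rw [logModulus_of_pos ht, min_eq_left hte]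

lemma logModulus_min (ht : 0 < t) : logModulus (min t (exp (-1))) = logModulus t := by
  rw [logModulus_of_pos ht, logModulus_of_pos (lt_min ht (exp_pos _)),
    min_eq_left (min_le_right t _)]

lemma two_le_one_sub_log_min (ht : 0 < t) : 2 ≤ 1 - log (min t (exp (-1))) := by
  have := log_le_log (lt_min ht (exp_pos _)) (min_le_right t (exp (-1)))
  rw [log_exp] at this
  linarith

lemma logModulus_pos (ht : 0 < t) : 0 < logModulus t := by
  rw [logModulus_of_pos ht]
  linarith [inv_pos.2 (zero_lt_two.trans_le (two_le_one_sub_log_min ht))]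

lemma logModulus_nonneg (t : ℝ) : 0 ≤ logModulus t := by
  rcases le_or_gt t 0 with ht | ht
  · rw [logModulus_of_nonpos ht]
  · exact (logModulus_pos ht).le

lemma logModulus_eq_zero_iff (ht : 0 ≤ t) : logModulus t = 0 ↔ t = 0 := by
  refine ⟨fun h => ?_, fun h => logModulus_of_nonpos h.le⟩
  by_contra hne
  exact (logModulus_pos (ht.lt_of_ne' hne)).ne' h

lemma monotone_logModulus : Monotone logModulus := by
  intro s t hst
  rcases le_or_gt s 0 with hs | hs
  · rw [logModulus_of_nonpos hs]
    exact logModulus_nonneg t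
  have ht := hs.trans_le hst
  rw [logModulus_of_pos hs, logModulus_of_pos ht]
  have := log_le_log (lt_min hs (exp_pos _)) (min_le_min_right (exp (-1)) hst)
  exact inv_anti₀ (zero_lt_two.trans_le (two_le_one_sub_log_min ht)) (by linarith)

lemma logModulus_div_le_of_le (hs : 0 < s) (hst : s ≤ t) (hte : t ≤ exp (-1)) :
    logModulus t / t ≤ logModulus s / s := by
  have ht := hs.trans_le hst
  have he : exp (-1) ≤ 1 := exp_le_one_iff.2 (by norm_num)
  rw [logModulus_of_le hs (hst.trans hte), logModulus_of_le ht hte, inv_div_left, inv_div_left]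
  have hpos : 0 < s * (1 - log s) :=
    mul_pos hs (by linarith [log_nonpos hs.le (hst.trans (hte.trans he))])
  exact inv_anti₀ hpos
    (monotoneOn_mul_one_sub_log ⟨hs, by linarith⟩ ⟨ht, hte.trans he⟩ hst)

lemma antitoneOn_logModulus_div : AntitoneOn (fun t => logModulus t / t) (Ioi 0) := by
  intro s hs t ht hst
  simp only
  by_cases hse : s ≤ exp (-1)
  · have hm : 0 < min t (exp (-1)) := lt_min ht (exp_pos _)
    calc logModulus t / t ≤ logModulus (min t (exp (-1))) / min t (exp (-1)) := by
          rw [logModulus_min ht]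
          exact div_le_div_of_nonneg_left (logModulus_nonneg t) hm (min_le_left _ _)
      _ ≤ logModulus s / s :=
          logModulus_div_le_of_le hs (le_min hst hse) (min_le_right _ _)
  · -- both `s` and `t` lie on the constant part
    have hse' : exp (-1) ≤ s := (lt_of_not_ge hse).le
    have hst' : logModulus t = logModulus s := by
      rw [← logModulus_min ht, ← logModulus_min (show (0:ℝ) < s from hs),
        min_eq_right hse', min_eq_right (hse'.trans hst)]
    rw [hst']
    exact div_le_div_of_nonneg_left (logModulus_nonneg s) hs hst

lemma continuousWithinAt_logModulus : ContinuousWithinAt logModulus (Ici 0) 0 := by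
  rw [← Ioi_insert, continuousWithinAt_insert_self, ContinuousWithinAt,
    logModulus_of_nonpos le_rfl]
  have h : Tendsto (fun t => (1 - log t)⁻¹) (𝓝[>] 0) (𝓝 0) := by
    refine tendsto_inv_atTop_zero.comp ?_
    simpa [sub_eq_add_neg] using
      tendsto_atTop_add_const_left _ 1 (tendsto_neg_atBot_atTop.comp tendsto_log_nhdsGT_zero)
  refine h.congr' ?_
  filter_upwards [Ioo_mem_nhdsGT (exp_pos (-1))] with t ht
  exact (logModulus_of_le ht.1 ht.2.le).symm

lemma isModulus_logModulus : IsModulus logModulus :=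
  ⟨fun a _ => logModulus_nonneg a, fun _ => logModulus_eq_zero_iff,
    fun _ _ => apply_add_le_of_antitoneOn_div (logModulus_nonneg 0) antitoneOn_logModulus_div,
    continuousWithinAt_logModulus, fun _ _ _ hab => monotone_logModulus hab⟩

lemma logModulus_sq_div_logModulus_two_mul {h : ℝ} (h0 : 0 < h) (hh : 2 * h ≤ exp (-1)) :
    logModulus (h ^ 2) / logModulus (2 * h) = 1 / 2 + (1 / 2 - log 2) / (1 - 2 * log h) := by
  have he : exp (-1) < 1 := exp_lt_one_iff.2 (by norm_num)
  have hsq : h ^ 2 ≤ exp (-1) := by nlinarith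
  have hlog : log h < 0 := log_neg h0 (by linarith)
  rw [logModulus_of_le (by positivity) hsq, logModulus_of_le (by positivity) hh,
    log_pow, log_mul two_ne_zero h0.ne']
  have : 1 - 2 * log h ≠ 0 := by linarith
  rw [inv_div_inv]
  push_cast
  rw [div_add_div _ _ two_ne_zero this, div_eq_div_iff this (mul_ne_zero two_ne_zero this)]
  ring

lemma tendsto_logModulus_sq_div_logModulus_two_mul :
    Tendsto (fun h => logModulus (h ^ 2) / logModulus (2 * h)) (𝓝[>] 0) (𝓝 (1 / 2)) := by
  have hden : Tendsto (fun h => 1 - 2 * log h) (𝓝[>] 0) atTop := by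
    simpa [sub_eq_add_neg] using tendsto_atTop_add_const_left _ 1
      ((tendsto_neg_atBot_atTop.comp tendsto_log_nhdsGT_zero).const_mul_atTop two_pos)
  have h := tendsto_const_nhds (x := (1 / 2 : ℝ)).add
    ((tendsto_const_nhds (x := 1 / 2 - log 2)).div_atTop hden)
  rw [add_zero] at h
  refine h.congr' ?_
  filter_upwards [Ioo_mem_nhdsGT (half_pos (exp_pos (-1)))] with h hh
  exact (logModulus_sq_div_logModulus_two_mul hh.1 (by linarith [hh.2])).symm

end logModulus

lemma mInt_compl (A : Set ℝ) (x α : ℝ) :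
    mInt Aᶜ x α = (volume (Ioo (x - α) (x + α) ∩ A)).toReal := by
  rw [mInt, compl_compl]

lemma isLebDensityPt_of_mInt_le_sq {A : Set ℝ} {x C : ℝ}
    (hA : ∀ᶠ α in 𝓝[>] 0, mInt A x α ≤ C * α ^ 2) : IsLebDensityPt A x := by
  have hlin : Tendsto (fun α : ℝ => C / 2 * α) (𝓝[>] 0) (𝓝 0) :=
    tendsto_nhdsWithin_of_tendsto_nhds <| by
      simpa using (continuous_const_mul (C / 2)).tendsto (0 : ℝ)
  refine squeeze_zero' ?_ ?_ hlin
  · filter_upwards [self_mem_nhdsWithin] with α (hα : 0 < α)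
    exact div_nonneg ENNReal.toReal_nonneg (by positivity)
  · filter_upwards [self_mem_nhdsWithin, hA] with α (hα : 0 < α) hle
    rw [div_le_iff₀ (by positivity)]
    linarith

lemma not_isGammaDensityPt_of_sq_le_mInt {γ : ℝ → ℝ} {A : Set ℝ} {x c : ℝ} {u : ℕ → ℝ}
    (hγ : IsModulus γ) (hu : Tendsto u atTop (𝓝[>] 0)) (hA : ∀ n, u n ^ 2 ≤ mInt A x (u n))
    (hc : Tendsto (fun α => γ (α ^ 2) / γ (2 * α)) (𝓝[>] 0) (𝓝 c)) (hc0 : 0 < c) :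
    ¬ IsGammaDensityPt γ A x := by
  obtain ⟨hγ_nonneg, -, -, -, hγ_mono⟩ := hγ
  intro hdens
  have : c ≤ 0 := le_of_tendsto_of_tendsto (hc.comp hu) (hdens.comp hu) <| by
    filter_upwards [hu.eventually self_mem_nhdsWithin] with n (hn : 0 < u n)
    exact div_le_div_of_nonneg_right (hγ_mono _ _ (sq_nonneg _) (hA n))
      (hγ_nonneg _ (by positivity))
  linarith

/-- With `rₙ = 2⁻⁽ⁿ⁺¹⁾`, the gap `(rₙ - rₙ², rₙ)` has length `rₙ² = 4⁻⁽ⁿ⁺¹⁾`. -/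
def gap (n : ℕ) : Set ℝ := Ioo ((2⁻¹ : ℝ) ^ (n + 1) - (4⁻¹ : ℝ) ^ (n + 1)) ((2⁻¹ : ℝ) ^ (n + 1))

def gapSet : Set ℝ := ⋃ n, gap n

lemma measurableSet_gapSet : MeasurableSet gapSet :=
  MeasurableSet.iUnion fun _ => measurableSet_Ioo

lemma volume_gap (n : ℕ) : volume (gap n) = ENNReal.ofReal ((4⁻¹ : ℝ) ^ (n + 1)) := by
  rw [gap, Real.volume_Ioo, sub_sub_cancel]

lemma four_inv_pow_eq_sq (n : ℕ) : (4⁻¹ : ℝ) ^ (n + 1) = ((2⁻¹ : ℝ) ^ (n + 1)) ^ 2 := by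
  rw [← pow_mul, mul_comm, pow_mul]
  norm_num

lemma two_inv_pow_succ_le_gap_left (n : ℕ) :
    (2⁻¹ : ℝ) ^ (n + 2) ≤ (2⁻¹ : ℝ) ^ (n + 1) - (4⁻¹ : ℝ) ^ (n + 1) := by
  have hr : (2⁻¹ : ℝ) ^ (n + 1) ≤ 2⁻¹ := pow_le_of_le_one (by norm_num) (by norm_num) n.succ_ne_zero
  rw [four_inv_pow_eq_sq, pow_succ _ (n + 1)]
  nlinarith [pow_pos (by norm_num : (0 : ℝ) < 2⁻¹) (n + 1)]

lemma Ioo_inter_gapSet_subset {h : ℝ} {n : ℕ} (hh : h ≤ (2⁻¹ : ℝ) ^ (n + 1)) :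
    Ioo (-h) h ∩ gapSet ⊆ ⋃ j, gap (n + j) := by
  rintro x ⟨⟨-, hxh⟩, hx⟩
  obtain ⟨k, hxk⟩ := mem_iUnion.1 hx
  obtain ⟨j, rfl⟩ : ∃ j, k = n + j := by
    refine Nat.exists_eq_add_of_le (le_of_not_gt fun hkn => ?_)
    have : (2⁻¹ : ℝ) ^ (n + 1) ≤ (2⁻¹ : ℝ) ^ (k + 2) :=
      pow_le_pow_of_le_one (by norm_num) (by norm_num) (by omega)
    linarith [hxk.1, two_inv_pow_succ_le_gap_left k]
  exact mem_iUnion.2 ⟨j, hxk⟩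

lemma volume_iUnion_gap_add_le (n : ℕ) :
    volume (⋃ j, gap (n + j)) ≤ ENNReal.ofReal (4 / 3 * (4⁻¹ : ℝ) ^ (n + 1)) := by
  have hgeom : HasSum (fun j : ℕ => (4⁻¹ : ℝ) ^ (n + j + 1)) (4 / 3 * (4⁻¹ : ℝ) ^ (n + 1)) := by
    have hterm : (fun j : ℕ => (4⁻¹ : ℝ) ^ (n + j + 1)) = fun j => (4⁻¹ : ℝ) ^ (n + 1) * 4⁻¹ ^ j := by
      ext j
      ring
    have hsum : 4 / 3 * (4⁻¹ : ℝ) ^ (n + 1) = (4⁻¹ : ℝ) ^ (n + 1) * (1 - 4⁻¹)⁻¹ := by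
      norm_num
      ring
    rw [hterm, hsum]
    exact (hasSum_geometric_of_lt_one (by norm_num) (by norm_num)).mul_left _
  calc volume (⋃ j, gap (n + j)) ≤ ∑' j, volume (gap (n + j)) := measure_iUnion_le _
    _ = ∑' j, ENNReal.ofReal ((4⁻¹ : ℝ) ^ (n + j + 1)) := by simp only [volume_gap]
    _ = ENNReal.ofReal (4 / 3 * (4⁻¹ : ℝ) ^ (n + 1)) := by
      rw [← ENNReal.ofReal_tsum_of_nonneg (fun j => by positivity) hgeom.summable, hgeom.tsum_eq]

lemma mInt_gapSet_compl_le_sq {h : ℝ} (h0 : 0 < h) (hh : h ≤ 2⁻¹) :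
    mInt gapSetᶜ 0 h ≤ 16 / 3 * h ^ 2 := by
  obtain ⟨n, hn_lt, hn_le⟩ := exists_nat_pow_near_of_lt_one (by positivity : 0 < 2 * h)
    (by linarith) (by norm_num : (0 : ℝ) < 2⁻¹) (by norm_num)
  have hh_le : h ≤ (2⁻¹ : ℝ) ^ (n + 1) := by rw [pow_succ]; linarith
  have hvol := (measure_mono (Ioo_inter_gapSet_subset hh_le)).trans (volume_iUnion_gap_add_le n)
  rw [mInt_compl, zero_sub, zero_add]
  refine (ENNReal.toReal_le_of_le_ofReal (by positivity) hvol).trans ?_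
  rw [four_inv_pow_eq_sq]
  nlinarith [pow_pos (by norm_num : (0 : ℝ) < 2⁻¹) (n + 1)]

lemma four_inv_pow_le_mInt_gapSet_compl (n : ℕ) :
    (4⁻¹ : ℝ) ^ (n + 1) ≤ mInt gapSetᶜ 0 ((2⁻¹ : ℝ) ^ (n + 1)) := by
  have hsub : gap n ⊆ Ioo (-(2⁻¹ : ℝ) ^ (n + 1)) ((2⁻¹ : ℝ) ^ (n + 1)) ∩ gapSet := by
    refine fun x hx => ⟨⟨?_, hx.2⟩, mem_iUnion.2 ⟨n, hx⟩⟩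
    have hx₁ : (2⁻¹ : ℝ) ^ (n + 1) - (4⁻¹ : ℝ) ^ (n + 1) < x := hx.1
    linarith [ two_inv_pow_succ_le_gap_left n, pow_pos (by norm_num : (0 : ℝ) < 2⁻¹) (n + 2),
      pow_pos (by norm_num : (0 : ℝ) < 2⁻¹) (n + 1)]
  rw [mInt_compl, zero_sub, zero_add, ← ENNReal.ofReal_le_iff_le_toReal
    ((measure_mono inter_subset_left).trans_lt measure_Ioo_lt_top).ne, ← volume_gap]
  exact measure_mono hsub

theorem stmt5 :
    ∃ (γ : ℝ → ℝ) (B : Set ℝ), IsModulus γ ∧ MeasurableSet B ∧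
      IsLebDensityPt B 0 ∧ ¬ IsGammaDensityPt γ B 0 := by
  refine ⟨logModulus, gapSetᶜ, isModulus_logModulus, measurableSet_gapSet.compl, ?_, ?_⟩
  · refine isLebDensityPt_of_mInt_le_sq (C := 16 / 3) ?_
    filter_upwards [Ioc_mem_nhdsGT (by norm_num : (0 : ℝ) < 2⁻¹)] with h hh
    exact mInt_gapSet_compl_le_sq hh.1 hh.2
  · have hu : Tendsto (fun n : ℕ => (2⁻¹ : ℝ) ^ (n + 1)) atTop (𝓝[>] 0) :=
      (tendsto_pow_atTop_nhdsWithin_zero_of_lt_one (by norm_num) (by norm_num)).comp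
        (tendsto_add_atTop_nat 1)
    refine not_isGammaDensityPt_of_sq_le_mInt isModulus_logModulus hu (fun n => ?_)
      tendsto_logModulus_sq_div_logModulus_two_mul one_half_pos
    rw [← four_inv_pow_eq_sq]
    exact four_inv_pow_le_mInt_gapSet_compl n
end

section
/- Let γ be a modulus function satisfying Condition (A): for every ε > 0 there exist c ∈ (0,1) and δ > 0 such that γ(ct)/γ(t) < ε for all 0 < t < δ. Then for every Lebesgue measurable set A ⊆ ℝ, every Lebesgue density point of A is a γ-density point of A. -/
open MeasureTheory Set Filter Topology

/-- Condition (A) for a modulus function. -/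
def CondA (γ : ℝ → ℝ) : Prop :=
  ∀ ε : ℝ, 0 < ε → ∃ c : ℝ, 0 < c ∧ c < 1 ∧ ∃ δ : ℝ, 0 < δ ∧
    ∀ t : ℝ, 0 < t → t < δ → γ (c * t) / γ t < ε

theorem stmt7 (γ : ℝ → ℝ) (hγ : IsModulus γ) (hA : CondA γ)
    (A : Set ℝ) (hAm : MeasurableSet A) (x : ℝ)
    (hx : IsLebDensityPt A x) : IsGammaDensityPt γ A x := by
  obtain ⟨hpos, hzero, hsub, hcont, hmono⟩ := hγ
  rw [IsGammaDensityPt, NormedAddCommGroup.tendsto_nhds_zero]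
  intro ε hε
  obtain ⟨c, hc0, hc1, δ, hδ, hcδ⟩ := hA ε hε
  have hx' := hx
  rw [IsLebDensityPt, NormedAddCommGroup.tendsto_nhds_zero] at hx'
  have h2 : Set.Ioo (0:ℝ) (δ/2) ∈ 𝓝[>] (0:ℝ) :=
    Ioo_mem_nhdsGT_of_mem (by constructor <;> [rfl; positivity])
  filter_upwards [hx' c hc0, h2] with α h1 hα
  obtain ⟨hα0, hαδ⟩ := hα
  have h2α : 0 < 2 * α := by linarith
  have hm0 : 0 ≤ mInt A x α := ENNReal.toReal_nonneg
  have hlt : mInt A x α / (2 * α) < c := by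
    calc mInt A x α / (2 * α) ≤ ‖mInt A x α / (2 * α)‖ := le_abs_self _
    _ < c := h1
  have hle : mInt A x α ≤ c * (2 * α) := by
    rw [div_lt_iff₀ h2α] at hlt; linarith
  have hγ1 : γ (mInt A x α) ≤ γ (c * (2 * α)) := hmono _ _ hm0 hle
  have hγ2 : 0 < γ (2 * α) := by
    rcases lt_or_eq_of_le (hpos _ h2α.le) with h | h
    · exact h
    · exact absurd ((hzero _ h2α.le).mp h.symm) (by positivity)
  have hγ3 : γ (c * (2 * α)) / γ (2 * α) < ε := hcδ _ h2α (by linarith)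
  have hratio : 0 ≤ γ (mInt A x α) / γ (2 * α) :=
    div_nonneg (hpos _ hm0) hγ2.le
  calc ‖γ (mInt A x α) / γ (2 * α)‖ = γ (mInt A x α) / γ (2 * α) := abs_of_nonneg hratio
  _ ≤ γ (c * (2 * α)) / γ (2 * α) := by gcongr
  _ < ε := hγ3
end

section
/- Let γ be a modulus function. Then every countable subset of ℝ is closed in the γ-density topology τ_γ. Consequently (ℝ, τ_γ) is not separable, and every τ_γ-compact subset of ℝ is finite. -/
open MeasureTheory Set Filter Topology

/-- The γ-density family. -/
def Tgamma (γ : ℝ → ℝ) : Set (Set ℝ) :=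
  {A : Set ℝ | MeasurableSet A ∧ A ⊆ {x : ℝ | IsGammaDensityPt γ A x}}

/-- The γ-density topology (generated by the γ-density family, which is a topology). -/
def tauGamma (γ : ℝ → ℝ) : TopologicalSpace ℝ :=
  TopologicalSpace.generateFrom (Tgamma γ)

/-! Every countable set is Lebesgue null, so each point of its complement has
`|(x - α, x + α) ∩ C| = 0` for all `α` and is trivially a γ-density point: countable sets are
τ_γ-closed. A countable dense set would then be all of the uncountable line, and a countably
infinite subset of a compact set would be closed, hence compact, and discrete, hence finite. -/

section CountablyClosed

variable {X : Type*} [TopologicalSpace X]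

theorem isDiscrete_of_countable (hclosed : ∀ C : Set X, C.Countable → IsClosed C) {S : Set X}
    (hS : S.Countable) : IsDiscrete S :=
  isDiscrete_iff_forall_mem_exists_isClosed.mpr fun s hs =>
    ⟨s, hclosed s (hS.mono hs), inter_eq_left.mpr hs⟩

theorem countable_of_separableSpace (hclosed : ∀ C : Set X, C.Countable → IsClosed C)
    [TopologicalSpace.SeparableSpace X] : Countable X := by
  obtain ⟨D, hD, hDense⟩ := TopologicalSpace.exists_countable_dense X
  have hD_univ : D = univ := (hclosed D hD).closure_eq.symm.trans hDense.closure_eq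
  exact countable_univ_iff.mp (hD_univ ▸ hD)

theorem IsCompact.finite_of_countable_isClosed
    (hclosed : ∀ C : Set X, C.Countable → IsClosed C) {K : Set X} (hK : IsCompact K) :
    K.Finite := by
  by_contra hinf
  obtain ⟨S, hSK, hS, hSinf⟩ := Set.Infinite.exists_subset_countable_infinite hinf
  have hS_compact : IsCompact S := hK.of_isClosed_subset (hclosed S hS) hSK
  exact hSinf (hS_compact.finite (isDiscrete_of_countable hclosed hS))

end CountablyClosed

theorem IsModulus.apply_zero {γ : ℝ → ℝ} (hγ : IsModulus γ) : γ 0 = 0 :=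
  (hγ.2.1 0 le_rfl).mpr rfl

theorem mInt_compl_of_measure_zero {C : Set ℝ} (hC : volume C = 0) (x α : ℝ) :
    mInt Cᶜ x α = 0 := by
  rw [mInt, compl_compl, measure_mono_null inter_subset_right hC, ENNReal.toReal_zero]

theorem compl_mem_Tgamma_of_measure_zero {γ : ℝ → ℝ} (hγ0 : γ 0 = 0) {C : Set ℝ}
    (hCm : MeasurableSet C) (hC : volume C = 0) : Cᶜ ∈ Tgamma γ := by
  refine ⟨hCm.compl, fun x _ => ?_⟩
  simp only [mem_ofPred_eq, IsGammaDensityPt, mInt_compl_of_measure_zero hC, hγ0, zero_div]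
  exact tendsto_const_nhds

theorem isClosed_tauGamma_of_countable {γ : ℝ → ℝ} (hγ : IsModulus γ) {C : Set ℝ}
    (hC : C.Countable) : IsClosed[tauGamma γ] C :=
  @IsClosed.mk ℝ (tauGamma γ) C <| TopologicalSpace.GenerateOpen.basic _
    (compl_mem_Tgamma_of_measure_zero hγ.apply_zero hC.measurableSet (hC.measure_zero _))

theorem stmt17 (γ : ℝ → ℝ) (hγ : IsModulus γ) :
    (∀ C : Set ℝ, C.Countable → IsClosed[tauGamma γ] C) ∧
    ¬ @TopologicalSpace.SeparableSpace ℝ (tauGamma γ) ∧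
    (∀ K : Set ℝ, @IsCompact ℝ (tauGamma γ) K → K.Finite) := by
  have hclosed : ∀ C : Set ℝ, C.Countable → IsClosed[tauGamma γ] C :=
    fun _ => isClosed_tauGamma_of_countable hγ
  exact ⟨hclosed,
    fun hsep => not_countable (@countable_of_separableSpace ℝ (tauGamma γ) hclosed hsep),
    fun K => @IsCompact.finite_of_countable_isClosed ℝ (tauGamma γ) hclosed K⟩
end
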